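/- arXiv:1109.5468 — 2 statements merged into one kernel-verified Lean document; each statement's English description precedes it below -/
import Mathlib

section
/- Let R be an HRS and C a static recursion component of R. If there exists a reduction pair (≳, >) such that R ⊆ ≳, C ⊆ ≳ ∪ >, and C ∩ > ≠ ∅, then C is non-looping. -/
/- A deep embedding of Nipkow-style higher-order rewrite systems (HRSs):
   simple types, simply-typed λ-preterms, η-long β-normal forms,
   rewrite rules, rewriting, strong computability, and the notions of
   the static dependency pair method (Kusakari–Isogai–Sakai–Blanqui). -/

namespace HRSPaper

attribute [local instance] Classical.propDecidable

/-- Simple types over a set `B` of basic types. -/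
inductive Ty (B : Type) : Type
  | base : B → Ty B
  | arrow : Ty B → Ty B → Ty B

/-- A variable is an index together with its simple type. -/
abbrev Vr (B : Type) := ℕ × Ty B

/-- Simply-typed λ-preterms over basic types `B` and function symbols `F`. -/
inductive Preterm (B F : Type) : Type
  | var : ℕ → Ty B → Preterm B F
  | const : F → Preterm B F
  | app : Preterm B F → Preterm B F → Preterm B F
  | lam : ℕ → Ty B → Preterm B F → Preterm B F

variable {B F : Type}

/-- The (optional) simple type of a preterm, given a signature `sig`. -/
noncomputable def typeOf (sig : F → Ty B) : Preterm B F → Option (Ty B)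
  | .var _ α => some α
  | .const f => some (sig f)
  | .app s t =>
      match typeOf sig s, typeOf sig t with
      | some (.arrow α β), some γ => if α = γ then some β else none
      | _, _ => none
  | .lam _ α t => (typeOf sig t).map (Ty.arrow α)

/-- Free variables of a preterm. -/
def FVset : Preterm B F → Set (Vr B)
  | .var n α => {(n, α)}
  | .const _ => ∅
  | .app s t => FVset s ∪ FVset t
  | .lam n α t => FVset t \ {(n, α)}

/-- Bound variables of a preterm. -/
def BVset : Preterm B F → Set (Vr B)
  | .var _ _ => ∅
  | .const _ => ∅
  | .app s t => BVset s ∪ BVset t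
  | .lam n α t => insert (n, α) (BVset t)

/-- Function symbols occurring in a preterm. -/
def symsOf : Preterm B F → Set F
  | .var _ _ => ∅
  | .const f => {f}
  | .app s t => symsOf s ∪ symsOf t
  | .lam _ _ t => symsOf t

/-- A substitution assigns a preterm to every variable. -/
abbrev Subst (B F : Type) := Vr B → Preterm B F

/-- Application of a substitution (acting on free variables only). -/
noncomputable def applySubst (θ : Subst B F) : Preterm B F → Preterm B F
  | .var n α => θ (n, α)
  | .const f => .const f
  | .app s t => .app (applySubst θ s) (applySubst θ t)
  | .lam n α t =>
      .lam n α (applySubst (fun v => if v = (n, α) then .var n α else θ v) t)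

/-- The substitution replacing only the variable `v` by `s`. -/
noncomputable def single (v : Vr B) (s : Preterm B F) : Subst B F :=
  fun w => if w = v then s else .var w.1 w.2

/-- `mkApp a [t1, …, tn]` is the iterated application `a t1 ⋯ tn`. -/
def mkApp (t : Preterm B F) (ts : List (Preterm B F)) : Preterm B F :=
  ts.foldl .app t

/-- `mkLam [x1, …, xm] t` is `λx1⋯xm. t`. -/
def mkLam (xs : List (Vr B)) (t : Preterm B F) : Preterm B F :=
  xs.foldr (fun v s => .lam v.1 v.2 s) t

/-- The list of leading λ-binders of a preterm. -/
def lamBinders : Preterm B F → List (Vr B)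
  | .lam n α t => (n, α) :: lamBinders t
  | _ => []

/-- Strip the leading λ-binders. -/
def stripLam : Preterm B F → Preterm B F
  | .lam _ _ t => stripLam t
  | t => t

/-- Decompose a preterm into its head and the list of its spine arguments. -/
def headArgs : Preterm B F → Preterm B F × List (Preterm B F)
  | .app s t => ((headArgs s).1, (headArgs s).2 ++ [t])
  | t => (t, [])

/-- For `t ≡ λx1⋯xm. a(t1,…,tn)`, `topOf t` is the head `a`. -/
def topOf (t : Preterm B F) : Preterm B F := (headArgs (stripLam t)).1

/-- For `t ≡ λx1⋯xm. a(t1,…,tn)`, `argsOf t` is the list `[t1, …, tn]`. -/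
def argsOf (t : Preterm B F) : List (Preterm B F) := (headArgs (stripLam t)).2

/-- The top symbol, if it is a function symbol. -/
def topSym (t : Preterm B F) : Option F :=
  match topOf t with
  | .const f => some f
  | _ => none

/-- Atoms: variables and function symbols. -/
def IsAtom : Preterm B F → Prop
  | .var _ _ => True
  | .const _ => True
  | _ => False

/-- `Canon sig t` : `t` is an η-long β-normal (canonical) well-typed term,
    i.e. of the form `λx1⋯xm. a(t1,…,tn)` of basic type under the binders,
    with canonical arguments.  These are the simply-typed *terms*. -/
inductive Canon (sig : F → Ty B) : Preterm B F → Prop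
  | lam : ∀ (n : ℕ) (α : Ty B) (t : Preterm B F),
      Canon sig t → Canon sig (.lam n α t)
  | head : ∀ (a : Preterm B F) (ts : List (Preterm B F)) (b : B),
      IsAtom a → (∀ u ∈ ts, Canon sig u) →
      typeOf sig (mkApp a ts) = some (.base b) →
      Canon sig (mkApp a ts)

/-- One step of β-reduction or η-expansion (with congruence closure). -/
inductive Conv (sig : F → Ty B) : Preterm B F → Preterm B F → Prop
  | beta : ∀ (n : ℕ) (α : Ty B) (t s : Preterm B F),
      Conv sig (.app (.lam n α t) s) (applySubst (single (n, α) s) t)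
  | eta : ∀ (t : Preterm B F) (α β : Ty B) (m : ℕ),
      typeOf sig t = some (.arrow α β) → (m, α) ∉ FVset t →
      Conv sig t (.lam m α (.app t (.var m α)))
  | app_left : ∀ {s s' t : Preterm B F},
      Conv sig s s' → Conv sig (.app s t) (.app s' t)
  | app_right : ∀ {s t t' : Preterm B F},
      Conv sig t t' → Conv sig (.app s t) (.app s t')
  | lam_body : ∀ {n : ℕ} {α : Ty B} {t t' : Preterm B F},
      Conv sig t t' → Conv sig (.lam n α t) (.lam n α t')

/-- `nf sig t` : the η-long β-normal form `t↓` of the preterm `t`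
    (an arbitrary reachable canonical form, if one exists). -/
noncomputable def nf (sig : F → Ty B) (t : Preterm B F) : Preterm B F :=
  if h : ∃ n, Relation.ReflTransGen (Conv sig) t n ∧ Canon sig n then h.choose
  else t

/-- Contexts: preterms with a single hole. -/
inductive Ctx (B F : Type) : Type
  | hole : Ctx B F
  | appL : Ctx B F → Preterm B F → Ctx B F
  | appR : Preterm B F → Ctx B F → Ctx B F
  | lam : ℕ → Ty B → Ctx B F → Ctx B F

/-- Filling the hole of a context with a preterm. -/
def Ctx.fill : Ctx B F → Preterm B F → Preterm B F
  | .hole, t => t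
  | .appL C u, t => .app (C.fill t) u
  | .appR u C, t => .app u (C.fill t)
  | .lam n α C, t => .lam n α (C.fill t)

/-- A rewrite rule `l → r`: both sides are terms, `top(l) ∈ Σ`,
    `type(l) = type(r)` is basic, and `FV(l) ⊇ FV(r)`. -/
structure Rule (B F : Type) (sig : F → Ty B) : Type where
  lhs : Preterm B F
  rhs : Preterm B F
  lhs_canon : Canon sig lhs
  rhs_canon : Canon sig rhs
  lhs_head : ∃ f : F, topOf lhs = .const f
  types_basic : ∃ b : B,
    typeOf sig lhs = some (.base b) ∧ typeOf sig rhs = some (.base b)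
  fv_sub : FVset rhs ⊆ FVset lhs

/-- A higher-order rewrite system is a set of rewrite rules. -/
abbrev HRS (B F : Type) (sig : F → Ty B) := Set (Rule B F sig)

/-- `θ` is a well-formed substitution: it maps each variable
    to a term of the same type. -/
def IsSubst (sig : F → Ty B) (θ : Subst B F) : Prop :=
  ∀ v : Vr B, Canon sig (θ v) ∧ typeOf sig (θ v) = some v.2

/-- The rewrite relation `s →R t` : `s ≡ C[lθ↓]` and `t ≡ C[rθ↓]`. -/
inductive Rew (sig : F → Ty B) (R : HRS B F sig) : Preterm B F → Preterm B F → Prop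
  | intro : ∀ (rule : Rule B F sig), rule ∈ R →
      ∀ (θ : Subst B F), IsSubst sig θ → ∀ (C : Ctx B F),
      Rew sig R (C.fill (nf sig (applySubst θ rule.lhs)))
                (C.fill (nf sig (applySubst θ rule.rhs)))

/-- `SN sig R t` : no infinite `→R`-reduction sequence starts from `t`. -/
def SN (sig : F → Ty B) (R : HRS B F sig) (t : Preterm B F) : Prop :=
  ¬ ∃ f : ℕ → Preterm B F, f 0 = t ∧ ∀ i, Rew sig R (f i) (f (i + 1))

/-- Strong computability at a given type, by recursion on the type. -/
def SCT (sig : F → Ty B) (R : HRS B F sig) : Ty B → Preterm B F → Prop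
  | .base _, t => SN sig R t
  | .arrow α β, t => ∀ u : Preterm B F,
      Canon sig u → typeOf sig u = some α → SCT sig R α u →
      SCT sig R β (nf sig (.app t u))

/-- `SC sig R t` : `t` is strongly computable. -/
def SC (sig : F → Ty B) (R : HRS B F sig) (t : Preterm B F) : Prop :=
  ∃ α : Ty B, typeOf sig t = some α ∧ SCT sig R α t

/-- `t ∈ T_SC^args(R)` : all arguments of `t` are strongly computable. -/
def SCargs (sig : F → Ty B) (R : HRS B F sig) (t : Preterm B F) : Prop :=
  ∀ u ∈ argsOf t, SC sig R u

/-- `IsSub t s` : `s ∈ Sub(t)`, i.e. `s` is a subterm of `t`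
    (`Sub(λx.s) = {λx.s} ∪ Sub(s)`, `Sub(a(t̄)) = {a(t̄)} ∪ ⋃ᵢ Sub(tᵢ)`). -/
inductive IsSub : Preterm B F → Preterm B F → Prop
  | refl : ∀ t : Preterm B F, IsSub t t
  | lam : ∀ (n : ℕ) (α : Ty B) (t s : Preterm B F),
      IsSub t s → IsSub (.lam n α t) s
  | arg : ∀ t u s : Preterm B F, u ∈ argsOf t → IsSub u s → IsSub t s

/-- The top symbol of `t` is a variable belonging to `X`. -/
def TopVarIn (X : Set (Vr B)) (t : Preterm B F) : Prop :=
  ∃ (n : ℕ) (α : Ty B), topOf t = .var n α ∧ (n, α) ∈ X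

/-- `SafeB X t s` : `s ∈ safe_B(t, X)`, where
    `safe_B(λx̄.a(t̄), X) = {a(t̄)}` if `a ∈ X`, and
    `safe_B(λx̄.a(t̄), X) = {a(t̄)} ∪ ⋃ᵢ safe_B(tᵢ, X)` otherwise. -/
inductive SafeB (X : Set (Vr B)) : Preterm B F → Preterm B F → Prop
  | self : ∀ t : Preterm B F, SafeB X t (stripLam t)
  | arg : ∀ t u s : Preterm B F, ¬ TopVarIn X t → u ∈ argsOf t →
      SafeB X u s → SafeB X t s

/-- `Safe l s` : `s ∈ safe(l)`, the safe subterms of a left-hand side `l`: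
    `safe(l) = args(l) ∪ ⋃_{l' ∈ args(l)} {u ∈ safe_B(l', FV(l)) ∣ FV(l) ⊇ FV(u)}`. -/
def Safe (l s : Preterm B F) : Prop :=
  s ∈ argsOf l ∨
    ∃ l' ∈ argsOf l, SafeB (FVset l) l' s ∧ FVset s ⊆ FVset l

/-- Plain function-passing: for every rule `l → r` and every subterm
    `Z(r1,…,rn)` of `r` headed by a free variable `Z` of `r`, some prefix
    `Z(r1,…,rk)↓` belongs to `safe(l)`. -/
def PFP (sig : F → Ty B) (R : HRS B F sig) : Prop :=
  ∀ rule ∈ R, ∀ s : Preterm B F, IsSub rule.rhs s →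
    ∀ (n : ℕ) (α : Ty B) (rs : List (Preterm B F)),
      s = mkApp (.var n α) rs → (n, α) ∈ FVset rule.rhs →
      ∃ k ≤ rs.length, Safe rule.lhs (nf sig (mkApp (.var n α) (rs.take k)))

/-- The defined symbols of `R`: top symbols of left-hand sides. -/
def Dsyms {sig : F → Ty B} (R : HRS B F sig) : Set F :=
  { f | ∃ rule ∈ R, topOf rule.lhs = Preterm.const f }

/-- `markHead D msym t` : the marked term `t#`, replacing the top symbol
    `a ∈ D` of `t ≡ a(t1,…,tn)` by its marked version `msym a`. -/
noncomputable def markHead (D : Set F) (msym : F → F) : Preterm B F → Preterm B F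
  | .app s t => .app (markHead D msym s) t
  | .const f => if f ∈ D then .const (msym f) else .const f
  | t => t

/-- `msym` provides fresh marked symbols: it is injective, type-preserving,
    and marked symbols do not occur in the rules of `R`. -/
def GoodMark (sig : F → Ty B) (R : HRS B F sig) (msym : F → F) : Prop :=
  Function.Injective msym ∧ (∀ f, sig (msym f) = sig f) ∧
    ∀ rule ∈ R, ∀ f : F, msym f ∉ symsOf rule.lhs ∪ symsOf rule.rhs

/-- `Cand t s` : `s ∈ Cand(t)`, the candidate terms of `t`:
    `Cand(λx̄.a(t1,…,tn)) = {λx̄.a(t̄)} ∪ ⋃ᵢ Cand(λx̄.tᵢ)`. -/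
inductive Cand : Preterm B F → Preterm B F → Prop
  | refl : ∀ t : Preterm B F, Cand t t
  | arg : ∀ t u s : Preterm B F, u ∈ argsOf t →
      Cand (mkLam (lamBinders t) u) s → Cand t s

/-- `IsSDP sig R (l, v)` : `l# → v#` is a static dependency pair of `R`,
    i.e. `v ≡ a(r1,…,rn)` with `λx̄.a(r1,…,rn) ∈ Cand(r)` for some rule
    `l → r ∈ R`, `a ∈ D_R`, and `a(r1,…,rk)↓ ∉ safe(l)` for all `k ≤ n`. -/
def IsSDP (sig : F → Ty B) (R : HRS B F sig)
    (p : Preterm B F × Preterm B F) : Prop :=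
  ∃ rule ∈ R, rule.lhs = p.1 ∧
    ∃ (xs : List (Vr B)) (a : F) (rs : List (Preterm B F)),
      p.2 = mkApp (.const a) rs ∧
      Cand rule.rhs (mkLam xs p.2) ∧
      a ∈ Dsyms R ∧
      ∀ k ≤ rs.length, ¬ Safe p.1 (nf sig (mkApp (.const a) (rs.take k)))

/-- An infinite static dependency chain: static dependency pairs `p i`
    and substitutions `θ i` with `(p i).2#θᵢ↓ →R* (p (i+1)).1#θᵢ₊₁↓`
    and `(p i).1 θᵢ↓, (p i).2 θᵢ↓ ∈ T_SC^args(R)`. -/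
def IsChainFrom (sig : F → Ty B) (R : HRS B F sig) (msym : F → F)
    (p : ℕ → Preterm B F × Preterm B F) (θ : ℕ → Subst B F) : Prop :=
  (∀ i, IsSDP sig R (p i)) ∧ (∀ i, IsSubst sig (θ i)) ∧
  (∀ i, Relation.ReflTransGen (Rew sig R)
      (nf sig (applySubst (θ i) (markHead (Dsyms R) msym (p i).2)))
      (nf sig (applySubst (θ (i + 1)) (markHead (Dsyms R) msym (p (i + 1)).1)))) ∧
  (∀ i, SCargs sig R (nf sig (applySubst (θ i) (p i).1)) ∧
        SCargs sig R (nf sig (applySubst (θ i) (p i).2)))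

/-- An arc in the static dependency graph: the two-element sequence
    `p, q` is a static dependency chain. -/
def ArcTo (sig : F → Ty B) (R : HRS B F sig) (msym : F → F)
    (p q : Preterm B F × Preterm B F) : Prop :=
  IsSDP sig R p ∧ IsSDP sig R q ∧
    ∃ θ₀ θ₁ : Subst B F, IsSubst sig θ₀ ∧ IsSubst sig θ₁ ∧
      Relation.ReflTransGen (Rew sig R)
        (nf sig (applySubst θ₀ (markHead (Dsyms R) msym p.2)))
        (nf sig (applySubst θ₁ (markHead (Dsyms R) msym q.1))) ∧
      SCargs sig R (nf sig (applySubst θ₀ p.1)) ∧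
      SCargs sig R (nf sig (applySubst θ₀ p.2)) ∧
      SCargs sig R (nf sig (applySubst θ₁ q.1)) ∧
      SCargs sig R (nf sig (applySubst θ₁ q.2))

/-- A static recursion component: the set of nodes of a strongly connected
    subgraph of the static dependency graph. -/
def IsSRC (sig : F → Ty B) (R : HRS B F sig) (msym : F → F)
    (C : Set (Preterm B F × Preterm B F)) : Prop :=
  (∀ p ∈ C, IsSDP sig R p) ∧
    ∀ p ∈ C, ∀ q ∈ C,
      Relation.TransGen
        (fun a b => a ∈ C ∧ b ∈ C ∧ ArcTo sig R msym a b) p q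

/-- `C` is non-looping: there is no infinite static dependency chain using
    only pairs of `C` in which every pair of `C` occurs infinitely often. -/
def NonLooping (sig : F → Ty B) (R : HRS B F sig) (msym : F → F)
    (C : Set (Preterm B F × Preterm B F)) : Prop :=
  ¬ ∃ (p : ℕ → Preterm B F × Preterm B F) (θ : ℕ → Subst B F),
      IsChainFrom sig R msym p θ ∧ (∀ i, p i ∈ C) ∧
      ∀ q ∈ C, ∀ N : ℕ, ∃ i, N ≤ i ∧ p i = q

/-- There is no infinite path (without repeated nodes) in the
    static dependency graph of `R`. -/
def NoInfinitePath (sig : F → Ty B) (R : HRS B F sig) (msym : F → F) : Prop :=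
  ¬ ∃ p : ℕ → Preterm B F × Preterm B F,
      Function.Injective p ∧ ∀ i, ArcTo sig R msym (p i) (p (i + 1))

/-- `(ge, gt)` is a reduction pair: `ge` is a quasi-order closed under
    contexts and substitutions, `gt` is a well-founded strict order closed
    under substitutions, and `ge∘gt ⊆ gt` or `gt∘ge ⊆ gt`. -/
structure IsRedPair (sig : F → Ty B)
    (ge gt : Preterm B F → Preterm B F → Prop) : Prop where
  ge_refl : ∀ t, ge t t
  ge_trans : ∀ s t u, ge s t → ge t u → ge s u
  gt_trans : ∀ s t u, gt s t → gt t u → gt s u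
  gt_irrefl : ∀ t, ¬ gt t t
  gt_wf : ¬ ∃ f : ℕ → Preterm B F, ∀ i, gt (f i) (f (i + 1))
  gt_subst : ∀ (s t : Preterm B F) (θ : Subst B F), IsSubst sig θ →
    gt s t → gt (nf sig (applySubst θ s)) (nf sig (applySubst θ t))
  ge_subst : ∀ (s t : Preterm B F) (θ : Subst B F), IsSubst sig θ →
    ge s t → ge (nf sig (applySubst θ s)) (nf sig (applySubst θ t))
  ge_ctx : ∀ (C : Ctx B F) (s t : Preterm B F), ge s t → ge (C.fill s) (C.fill t)
  compat : (∀ s t u, ge s t → gt t u → gt s u) ∨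
           (∀ s t u, gt s t → ge t u → gt s u)

/-- `SubAt t p s` : `s ≡ t|p`, the subterm of `t` at position `p`. -/
inductive SubAt : Preterm B F → List ℕ → Preterm B F → Prop
  | nil : ∀ t : Preterm B F, SubAt t [] t
  | lam : ∀ (n : ℕ) (α : Ty B) (t : Preterm B F) (p : List ℕ) (s : Preterm B F),
      SubAt t p s → SubAt (.lam n α t) (1 :: p) s
  | arg : ∀ (t : Preterm B F) (i : ℕ) (p : List ℕ) (s u : Preterm B F),
      (∀ (n : ℕ) (α : Ty B) (b : Preterm B F), t ≠ .lam n α b) →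
      1 ≤ i → (argsOf t)[i - 1]? = some u →
      SubAt u p s → SubAt t (i :: p) s

/-- The subterm criterion for a static recursion component `C`:
    there is a map `π` from defined symbols to non-empty sequences of
    positive integers such that
    (α) `u|π(top u) >sub v|π(top v)` for some `u# → v# ∈ C`, and
    (β) for all `u# → v# ∈ C`: `u|π(top u) ≥sub v|π(top v)`,
        `top(u|p) ∉ FV(u)` for all `p ≺ π(top u)`, and
        `q = ε ∨ top(v|q) ∉ FV(v) ∪ D_R` for all `q ≺ π(top v)`. -/
def SubCrit (sig : F → Ty B) (R : HRS B F sig)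
    (C : Set (Preterm B F × Preterm B F)) : Prop :=
  ∃ π : F → List ℕ,
    (∀ f, π f ≠ [] ∧ ∀ i ∈ π f, 1 ≤ i) ∧
    (∃ p ∈ C, ∃ (f g : F) (u v : Preterm B F),
        topSym p.1 = some f ∧ topSym p.2 = some g ∧
        SubAt p.1 (π f) u ∧ SubAt p.2 (π g) v ∧ IsSub u v ∧ u ≠ v) ∧
    (∀ p ∈ C, ∃ (f g : F) (u v : Preterm B F),
        topSym p.1 = some f ∧ topSym p.2 = some g ∧
        SubAt p.1 (π f) u ∧ SubAt p.2 (π g) v ∧ IsSub u v ∧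
        (∀ q : List ℕ, q <+: π f → q ≠ π f → ∀ s, SubAt p.1 q s →
            ∀ (n : ℕ) (α : Ty B), topOf s = .var n α → (n, α) ∉ FVset p.1) ∧
        (∀ q : List ℕ, q <+: π g → q ≠ π g → q ≠ [] → ∀ s, SubAt p.2 q s →
            (∀ (n : ℕ) (α : Ty B), topOf s = .var n α → (n, α) ∉ FVset p.2) ∧
            (∀ f' : F, topOf s = .const f' → f' ∉ Dsyms R)))

/-- A preterm containing no λ-abstraction. -/
def LamFree : Preterm B F → Prop
  | .lam _ _ _ => False
  | .app s t => LamFree s ∧ LamFree t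
  | _ => True

/- Along an infinite chain in `C`, the marked instances satisfy `uᵢθᵢ# (≳ ∪ >) vᵢθᵢ# ≳ uᵢ₊₁θᵢ₊₁#`,
the second step because `→R* ⊆ ≳` (`R ⊆ ≳` and `≳` is closed under contexts and substitutions),
and a strict step occurs infinitely often since a pair of `C ∩ >` recurs. Compatibility
(`≳ ∘ > ⊆ >` or `> ∘ ≳ ⊆ >`) collapses each stretch between two strict steps into a single `>`,
which yields an infinite `>`-descending sequence. -/

section Absorption

open Filter Relation

variable {α : Type*} {ge gt : α → α → Prop}

theorem gt_of_reflTransGen_of_gt (gt_trans : ∀ s t u, gt s t → gt t u → gt s u)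
    (absorb : ∀ s t u, ge s t → gt t u → gt s u) {a b d : α}
    (hab : ReflTransGen (fun s t => ge s t ∨ gt s t) a b) (hbd : gt b d) : gt a d := by
  induction hab using ReflTransGen.head_induction_on with
  | refl => exact hbd
  | head hst _ ih => exact hst.elim (absorb _ _ _ · ih) (gt_trans _ _ _ · ih)

theorem gt_of_gt_of_reflTransGen (gt_trans : ∀ s t u, gt s t → gt t u → gt s u)
    (absorb : ∀ s t u, gt s t → ge t u → gt s u) {a b d : α}
    (hab : gt a b) (hbd : ReflTransGen (fun s t => ge s t ∨ gt s t) b d) : gt a d := by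
  induction hbd with
  | refl => exact hab
  | tail _ hst ih => exact hst.elim (absorb _ _ _ ih ·) (gt_trans _ _ _ ih ·)

theorem exists_gt_chain_of_frequently_gt (gt_trans : ∀ s t u, gt s t → gt t u → gt s u)
    (compat : (∀ s t u, ge s t → gt t u → gt s u) ∨ (∀ s t u, gt s t → ge t u → gt s u))
    (a b : ℕ → α) (hab : ∀ i, ge (a i) (b i) ∨ gt (a i) (b i))
    (hba : ∀ i, ge (b i) (a (i + 1))) (hfreq : ∃ᶠ i in atTop, gt (a i) (b i)) :
    ∃ f : ℕ → α, ∀ k, gt (f k) (f (k + 1)) := by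
  set S : α → α → Prop := fun s t => ge s t ∨ gt s t
  have ha_succ : ∀ i, ReflTransGen S (a i) (a (i + 1)) :=
    fun i => .tail (.single (hab i)) (.inl (hba i))
  have ha_mono : ∀ ⦃i j⦄, i ≤ j → ReflTransGen S (a i) (a j) :=
    Nat.rel_of_forall_rel_succ_of_le _ ha_succ
  obtain ⟨φ, hφ, hgt⟩ := extraction_of_frequently_atTop hfreq
  have hpath : ∀ k, ReflTransGen S (b (φ k)) (a (φ (k + 1))) :=
    fun k => .head (.inl (hba _)) (ha_mono (hφ k.lt_add_one))
  rcases compat with absorb | absorb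
  · exact ⟨b ∘ φ, fun k => gt_of_reflTransGen_of_gt gt_trans absorb (hpath k) (hgt (k + 1))⟩
  · exact ⟨a ∘ φ, fun k => gt_of_gt_of_reflTransGen gt_trans absorb (hgt k) (hpath k)⟩

end Absorption

namespace IsRedPair

variable {sig : F → Ty B} {ge gt : Preterm B F → Preterm B F → Prop} {R : HRS B F sig}

theorem ge_of_rew (hrp : IsRedPair sig ge gt) (hR : ∀ rule ∈ R, ge rule.lhs rule.rhs)
    {s t : Preterm B F} (h : Rew sig R s t) : ge s t := by
  obtain ⟨rule, hrule, θ, hθ, C⟩ := h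
  exact hrp.ge_ctx C _ _ (hrp.ge_subst _ _ θ hθ (hR rule hrule))

theorem ge_of_reflTransGen_rew (hrp : IsRedPair sig ge gt)
    (hR : ∀ rule ∈ R, ge rule.lhs rule.rhs) {s t : Preterm B F}
    (h : Relation.ReflTransGen (Rew sig R) s t) : ge s t := by
  induction h with
  | refl => exact hrp.ge_refl s
  | tail _ hst ih => exact hrp.ge_trans _ _ _ ih (hrp.ge_of_rew hR hst)

end IsRedPair

theorem nonlooping_of_reduction_pair_general
    {B F : Type} (sig : F → Ty B) (R : HRS B F sig)
    (msym : F → F)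
    (C : Set (Preterm B F × Preterm B F))
    (ge gt : Preterm B F → Preterm B F → Prop)
    (hrp : IsRedPair sig ge gt)
    (hR : ∀ rule ∈ R, ge rule.lhs rule.rhs)
    (hCge : ∀ p ∈ C,
        ge (markHead (Dsyms R) msym p.1) (markHead (Dsyms R) msym p.2) ∨
        gt (markHead (Dsyms R) msym p.1) (markHead (Dsyms R) msym p.2))
    (hCgt : ∃ p ∈ C,
        gt (markHead (Dsyms R) msym p.1) (markHead (Dsyms R) msym p.2)) :
    NonLooping sig R msym C := by
  rintro ⟨p, θ, ⟨-, hθ, hred, -⟩, hpC, hocc⟩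
  obtain ⟨q, hqC, hqgt⟩ := hCgt
  have hfreq : ∃ᶠ i in Filter.atTop,
      gt (nf sig (applySubst (θ i) (markHead (Dsyms R) msym (p i).1)))
        (nf sig (applySubst (θ i) (markHead (Dsyms R) msym (p i).2))) := by
    refine Filter.frequently_atTop.mpr fun N => ?_
    obtain ⟨i, hiN, hiq⟩ := hocc q hqC N
    exact ⟨i, hiN, hrp.gt_subst _ _ _ (hθ i) (hiq ▸ hqgt)⟩
  exact hrp.gt_wf <| exists_gt_chain_of_frequently_gt hrp.gt_trans hrp.compat _ _
    (fun i => (hCge _ (hpC i)).imp (hrp.ge_subst _ _ _ (hθ i)) (hrp.gt_subst _ _ _ (hθ i)))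
    (fun i => hrp.ge_of_reflTransGen_rew hR (hred i)) hfreq

/-- Lemma 5: a static recursion component `C` admitting
a reduction pair `(≳, >)` with `R ⊆ ≳`, `C ⊆ ≳ ∪ >` and `C ∩ > ≠ ∅`
is non-looping. -/
theorem nonlooping_of_reduction_pair
    {B F : Type} (sig : F → Ty B) (R : HRS B F sig)
    (msym : F → F) (_hm : GoodMark sig R msym)
    (C : Set (Preterm B F × Preterm B F)) (hC : IsSRC sig R msym C)
    (ge gt : Preterm B F → Preterm B F → Prop)
    (hrp : IsRedPair sig ge gt)
    (hR : ∀ rule ∈ R, ge rule.lhs rule.rhs)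
    (hCge : ∀ p ∈ C,
        ge (markHead (Dsyms R) msym p.1) (markHead (Dsyms R) msym p.2) ∨
        gt (markHead (Dsyms R) msym p.1) (markHead (Dsyms R) msym p.2))
    (hCgt : ∃ p ∈ C,
        gt (markHead (Dsyms R) msym p.1) (markHead (Dsyms R) msym p.2)) :
    NonLooping sig R msym C :=
  nonlooping_of_reduction_pair_general sig R msym C ge gt hrp hR hCge hCgt

end HRSPaper
end

section
/- Let T be a type, ≳ a reflexive and transitive binary relation on T, and > a well-founded binary relation on T such that ≳∘> ⊆ > or >∘≳ ⊆ > (where (≳∘>) s u means s ≳ t and t > u for some t, and similarly for >∘≳). Then there is no infinite sequence t0, t1, t2, … such that for every i, ti ≳ t_{i+1} or ti > t_{i+1}, and ti > t_{i+1} holds for infinitely many i. -/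
/-! Enumerate the `>` steps of the sequence as `s 0 < s 1 < ⋯`. Between `s n + 1` and `s (n + 1)`
only `≳` steps occur, so `t (s n) > t (s n + 1) ≳* t (s (n + 1))`. Absorbing the `≳*` part into
the following `>` step (when `≳∘> ⊆ >`) or into the preceding one (when `>∘≳ ⊆ >`) yields an
infinite `>`-descending sequence. -/

open Relation

section Absorb

variable {α : Type*} {ge gt : α → α → Prop}

theorem gt_of_reflTransGen_of_gt (hc : ∀ s t u, ge s t → gt t u → gt s u) {s t u : α}
    (hst : ReflTransGen ge s t) (htu : gt t u) : gt s u := by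
  induction hst using ReflTransGen.head_induction_on with
  | refl => exact htu
  | head hst' _ ih => exact hc _ _ _ hst' ih

theorem gt_of_gt_of_reflTransGen (hc : ∀ s t u, gt s t → ge t u → gt s u) {s t u : α}
    (hst : gt s t) (htu : ReflTransGen ge t u) : gt s u := by
  induction htu with
  | refl => exact hst
  | tail _ htu' ih => exact hc _ _ _ ih htu'

theorem reflTransGen_nth_add_one_nth_succ {p : ℕ → Prop} (hp : {i | p i}.Infinite) {f : ℕ → α}
    (hstep : ∀ i, ¬ p i → ge (f i) (f (i + 1))) (n : ℕ) :
    ReflTransGen ge (f (Nat.nth p n + 1)) (f (Nat.nth p (n + 1))) := by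
  have hgap : ∀ i ∈ Set.Ico (Nat.nth p n + 1) (Nat.nth p (n + 1)), ge (f i) (f (i + 1)) :=
    fun i hi => hstep i fun hpi => (Nat.le_nth_of_lt_nth_succ hi.2 hpi).not_gt hi.1
  exact (reflTransGen_of_succ_of_le _ hgap (Nat.nth_strictMono hp n.lt_succ_self)).lift f
    fun _ _ h => h

end Absorb

theorem no_infinite_quasi_strict_sequence_general
    {T : Type*} (ge gt : T → T → Prop)
    (hwf : ¬ ∃ f : ℕ → T, ∀ i, gt (f i) (f (i + 1)))
    (hcompat : (∀ s t u, ge s t → gt t u → gt s u) ∨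
               (∀ s t u, gt s t → ge t u → gt s u)) :
    ¬ ∃ f : ℕ → T,
        (∀ i, ge (f i) (f (i + 1)) ∨ gt (f i) (f (i + 1))) ∧
        (∀ N : ℕ, ∃ i, N ≤ i ∧ gt (f i) (f (i + 1))) := by
  rintro ⟨f, hstep, hfreq⟩
  set p : ℕ → Prop := fun i => gt (f i) (f (i + 1))
  have hp : {i | p i}.Infinite :=
    Nat.frequently_atTop_iff_infinite.mp (Filter.frequently_atTop.mpr hfreq)
  have hgt (n : ℕ) : gt (f (Nat.nth p n)) (f (Nat.nth p n + 1)) := Nat.nth_mem_of_infinite hp n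
  have hge := reflTransGen_nth_add_one_nth_succ hp fun i => (hstep i).resolve_right
  rcases hcompat with hc | hc
  · exact hwf ⟨fun n => f (Nat.nth p n + 1), fun n => gt_of_reflTransGen_of_gt hc (hge n) (hgt _)⟩
  · exact hwf ⟨fun n => f (Nat.nth p n), fun n => gt_of_gt_of_reflTransGen hc (hgt n) (hge n)⟩

/-- let `≳` be reflexive and transitive and `>` be
well-founded (no infinite descending sequence) on a type `T`, with
`≳∘> ⊆ >` or `>∘≳ ⊆ >`.  Then there is no infinite sequence of `≳`/`>`
steps containing infinitely many `>` steps. -/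
theorem no_infinite_quasi_strict_sequence
    {T : Type*} (ge gt : T → T → Prop)
    (hge_refl : Reflexive ge) (hge_trans : Transitive ge)
    (hwf : ¬ ∃ f : ℕ → T, ∀ i, gt (f i) (f (i + 1)))
    (hcompat : (∀ s t u, ge s t → gt t u → gt s u) ∨
               (∀ s t u, gt s t → ge t u → gt s u)) :
    ¬ ∃ f : ℕ → T,
        (∀ i, ge (f i) (f (i + 1)) ∨ gt (f i) (f (i + 1))) ∧
        (∀ N : ℕ, ∃ i, N ≤ i ∧ gt (f i) (f (i + 1))) :=
  no_infinite_quasi_strict_sequence_general ge gt hwf hcompat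
end
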